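/- Define H_d^{(k)} : {±1}^(2p+2) → C iteratively by H_d^{(0)}(z) = 1 and H_d^{(k)}(z) = (Σ_{x : x_{p+1}=x_{-(p+1)}} exp(−i A·(xz)) H_d^{(k-1)}(x) f(x))^d, where f : {±1}^(2p+2) → C satisfies f(x') = −f(x) for x ∉ B₀, f(x) = 0 when T(x) = p+1, and Σ_{x∈B₀} f(x) = 1, and A is the antisymmetric parameter vector. Then for every 0 ≤ k ≤ p: H_d^{(k)}(a) = 1 whenever T(a) = 0, and H_d^{(k)}(a') = H_d^{(k)}(a) whenever T(a) > 0. -/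

import Mathlib

/-!
In the sum defining `H^{(k+1)}(z)`, pair each `x` with `x'`. When `T(x) > T(z)` the
coordinates `≤ T(z)` of `x` and `x'` agree, so `A·(x'z) = A·(xz)`; inductively
`H^{(k)}(x') = H^{(k)}(x)`, while `f(x') = -f(x)`, so these terms cancel. What is left is the
sum over `T(x) ≤ T(z)`. On it, `A·(xz)` only sees coordinates where `z` and `z'` agree, which
gives `H^{(k+1)}(z') = H^{(k+1)}(z)`; and for `T(z) = 0` it is the sum of `f` over `B₀`, where
`A·(xz) = 0` and `H^{(k)}(x) = 1`, so it equals `1`.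
-/

open Complex BigOperators

noncomputable section

abbrev Conf (p : ℕ) := (Fin (p + 1) → Bool) × (Fin (p + 1) → Bool)

def sgn : Bool → ℝ := fun b => if b then 1 else -1

def Tval {p : ℕ} (a : Conf p) : ℕ :=
  (Finset.univ.filter fun j : Fin (p + 1) => a.1 j ≠ a.2 j).sup fun j => (j : ℕ) + 1

def primeOp {p : ℕ} (a : Conf p) : Conf p :=
  (fun j => if Tval a < (j : ℕ) + 1 then !(a.1 j) else a.1 j,
   fun j => if Tval a < (j : ℕ) + 1 then !(a.2 j) else a.2 j)

/-- `A·(ab)` for the antisymmetric parameter vector `A = (α_1,…,α_p,0,0,−α_p,…,−α_1)`. -/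
def Adot {p : ℕ} (α : Fin p → ℝ) (a b : Conf p) : ℝ :=
  ∑ j : Fin p, α j * (sgn (a.1 j.castSucc) * sgn (b.1 j.castSucc)
      - sgn (a.2 j.castSucc) * sgn (b.2 j.castSucc))

/-- the iterates `H_d^{(k)}`: `H_d^{(0)} = 1` and
`H_d^{(k)}(z) = (Σ_{x : x_{p+1} = x_{-(p+1)}} e^{-i A·(xz)} H_d^{(k-1)}(x) f(x))^d`. -/
noncomputable def Hd {p : ℕ} (α : Fin p → ℝ) (f : Conf p → ℂ) (d : ℕ) : ℕ → Conf p → ℂ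
  | 0, _ => 1
  | k + 1, z =>
      (∑ x ∈ Finset.univ.filter (fun x : Conf p => x.1 (Fin.last p) = x.2 (Fin.last p)),
        Complex.exp (-I * ((Adot α x z : ℝ) : ℂ)) * Hd α f d k x * f x) ^ d

namespace Conf

variable {p : ℕ}

lemma eq_of_Tval_lt (a : Conf p) {j : Fin (p + 1)} (h : Tval a < (j : ℕ) + 1) :
    a.1 j = a.2 j := by
  by_contra hne
  have : (j : ℕ) + 1 ≤ Tval a :=
    Finset.le_sup (f := fun j : Fin (p + 1) => (j : ℕ) + 1) (by simpa using hne)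
  omega

lemma Tval_eq_zero_iff (a : Conf p) : Tval a = 0 ↔ a.1 = a.2 := by
  refine ⟨fun h => funext fun j => a.eq_of_Tval_lt (by omega), fun h => ?_⟩
  simp [Tval, h]

lemma primeOp_fst_eq_snd_iff (a : Conf p) (j : Fin (p + 1)) :
    (primeOp a).1 j = (primeOp a).2 j ↔ a.1 j = a.2 j := by
  simp only [primeOp]
  split <;> simp

lemma Tval_primeOp (a : Conf p) : Tval (primeOp a) = Tval a := by
  simp only [Tval, ne_eq, primeOp_fst_eq_snd_iff]

lemma primeOp_involutive : Function.Involutive (primeOp (p := p)) := by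
  intro a
  ext j
  · change (if Tval (primeOp a) < (j : ℕ) + 1 then !(primeOp a).1 j else (primeOp a).1 j) = a.1 j
    rw [Tval_primeOp, primeOp]
    by_cases h : Tval a < (j : ℕ) + 1 <;> simp [h]
  · change (if Tval (primeOp a) < (j : ℕ) + 1 then !(primeOp a).2 j else (primeOp a).2 j) = a.2 j
    rw [Tval_primeOp, primeOp]
    by_cases h : Tval a < (j : ℕ) + 1 <;> simp [h]

lemma Adot_comm (α : Fin p → ℝ) (a b : Conf p) : Adot α a b = Adot α b a := by
  unfold Adot
  exact Finset.sum_congr rfl fun j _ => by ring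

lemma Adot_primeOp_right (α : Fin p → ℝ) {x z : Conf p} (h : Tval x ≤ Tval z) :
    Adot α x (primeOp z) = Adot α x z := by
  refine Finset.sum_congr rfl fun j _ => ?_
  simp only [primeOp]
  split
  · rename_i hz
    rw [x.eq_of_Tval_lt (j := j.castSucc) (by omega), z.eq_of_Tval_lt hz]
    ring
  · rfl

lemma Adot_primeOp_left (α : Fin p → ℝ) {x z : Conf p} (h : Tval z ≤ Tval x) :
    Adot α (primeOp x) z = Adot α x z := by
  rw [Adot_comm, Adot_primeOp_right α h, Adot_comm]

lemma Adot_eq_zero (α : Fin p → ℝ) {x z : Conf p} (hx : x.1 = x.2) (hz : z.1 = z.2) :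
    Adot α x z = 0 := by
  unfold Adot
  exact Finset.sum_eq_zero fun j _ => by rw [hx, hz]; ring

end Conf

open Conf

def stepSum {p : ℕ} (α : Fin p → ℝ) (f g : Conf p → ℂ) (z : Conf p) : ℂ :=
  ∑ x ∈ Finset.univ.filter (fun x : Conf p => x.1 (Fin.last p) = x.2 (Fin.last p)),
    Complex.exp (-I * ((Adot α x z : ℝ) : ℂ)) * g x * f x

variable {p : ℕ} (α : Fin p → ℝ) {f g : Conf p → ℂ}

lemma Hd_succ (d k : ℕ) (z : Conf p) : Hd α f d (k + 1) z = stepSum α f (Hd α f d k) z ^ d :=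
  rfl

lemma sum_Tval_gt_eq_zero (hf : ∀ x : Conf p, x.1 ≠ x.2 → f (primeOp x) = -f x)
    (hg : ∀ x : Conf p, 0 < Tval x → g (primeOp x) = g x) {z : Conf p} {t : ℕ}
    (hzt : Tval z ≤ t) :
    ∑ x ∈ (Finset.univ.filter fun x : Conf p => x.1 (Fin.last p) = x.2 (Fin.last p)).filter
        (fun x => t < Tval x),
      Complex.exp (-I * ((Adot α x z : ℝ) : ℂ)) * g x * f x = 0 := by
  have h_pair : ∀ x : Conf p, t < Tval x →
      Complex.exp (-I * ((Adot α x z : ℝ) : ℂ)) * g x * f x +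
        Complex.exp (-I * ((Adot α (primeOp x) z : ℝ) : ℂ)) * g (primeOp x) * f (primeOp x)
        = 0 := by
    intro x hx
    have hx_ne : x.1 ≠ x.2 := fun h => by rw [(Tval_eq_zero_iff x).2 h] at hx; omega
    rw [Adot_primeOp_left α (by omega), hg x (by omega), hf x hx_ne]
    ring
  refine Finset.sum_involution (fun x _ => primeOp x) (fun x hx => h_pair x (by simp_all))
    (fun x hx hne hfix => hne ?_) (fun x hx => ?_) (fun x _ => primeOp_involutive x)
  · -- a fixed point of the pairing cancels against itself
    have := h_pair x (by simp_all)
    rwa [hfix, add_self_eq_zero] at this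
  · simp_all [primeOp_fst_eq_snd_iff, Tval_primeOp]

lemma stepSum_eq_sum_Tval_le (hf : ∀ x : Conf p, x.1 ≠ x.2 → f (primeOp x) = -f x)
    (hg : ∀ x : Conf p, 0 < Tval x → g (primeOp x) = g x) {z : Conf p} {t : ℕ}
    (hzt : Tval z ≤ t) :
    stepSum α f g z =
      ∑ x ∈ (Finset.univ.filter fun x : Conf p => x.1 (Fin.last p) = x.2 (Fin.last p)).filter
          (fun x => Tval x ≤ t),
        Complex.exp (-I * ((Adot α x z : ℝ) : ℂ)) * g x * f x := by
  rw [stepSum, ← Finset.sum_filter_add_sum_filter_not _ (fun x => Tval x ≤ t)]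
  simp only [not_le]
  rw [sum_Tval_gt_eq_zero α hf hg hzt, add_zero]

lemma stepSum_primeOp (hf : ∀ x : Conf p, x.1 ≠ x.2 → f (primeOp x) = -f x)
    (hg : ∀ x : Conf p, 0 < Tval x → g (primeOp x) = g x) (a : Conf p) :
    stepSum α f g (primeOp a) = stepSum α f g a := by
  rw [stepSum_eq_sum_Tval_le α hf hg (z := primeOp a) (Tval_primeOp a).le,
    stepSum_eq_sum_Tval_le α hf hg (z := a) le_rfl]
  refine Finset.sum_congr rfl fun x hx => ?_
  rw [Adot_primeOp_right α (Finset.mem_filter.1 hx).2]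

lemma stepSum_eq_one (hf : ∀ x : Conf p, x.1 ≠ x.2 → f (primeOp x) = -f x)
    (hf_sum : ∑ x ∈ Finset.univ.filter (fun x : Conf p => x.1 = x.2), f x = 1)
    (hg_one : ∀ x : Conf p, Tval x = 0 → g x = 1)
    (hg : ∀ x : Conf p, 0 < Tval x → g (primeOp x) = g x) {a : Conf p} (ha : Tval a = 0) :
    stepSum α f g a = 1 := by
  have h_diag : (Finset.univ.filter fun x : Conf p => x.1 (Fin.last p) = x.2 (Fin.last p)).filter
      (fun x => Tval x ≤ 0) = Finset.univ.filter (fun x : Conf p => x.1 = x.2) := by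
    ext x
    simp only [Finset.mem_filter, Finset.mem_univ, true_and, Nat.le_zero, Tval_eq_zero_iff]
    exact ⟨And.right, fun h => ⟨by rw [h], h⟩⟩
  rw [stepSum_eq_sum_Tval_le α hf hg ha.le, h_diag, ← hf_sum]
  refine Finset.sum_congr rfl fun x hx => ?_
  have hx : x.1 = x.2 := (Finset.mem_filter.1 hx).2
  rw [Adot_eq_zero α hx ((Tval_eq_zero_iff a).1 ha), hg_one x ((Tval_eq_zero_iff x).2 hx)]
  simp

theorem Hd_prime_invariant_general (p d : ℕ) (α : Fin p → ℝ) (f : Conf p → ℂ)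
    (hf1 : ∀ x : Conf p, x.1 ≠ x.2 → f (primeOp x) = -f x)
    (hf3 : ∑ x ∈ Finset.univ.filter (fun x : Conf p => x.1 = x.2), f x = 1) :
    ∀ k ≤ p,
      (∀ a : Conf p, Tval a = 0 → Hd α f d k a = 1) ∧
      (∀ a : Conf p, 0 < Tval a → Hd α f d k (primeOp a) = Hd α f d k a) := by
  intro k hk
  induction k with
  | zero => exact ⟨fun _ _ => rfl, fun _ _ => rfl⟩
  | succ k ih =>
    obtain ⟨h_one, h_prime⟩ := ih (by omega)
    refine ⟨fun a ha => ?_, fun a _ => ?_⟩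
    · rw [Hd_succ, stepSum_eq_one α hf1 hf3 h_one h_prime ha, one_pow]
    · rw [Hd_succ, Hd_succ, stepSum_primeOp α hf1 h_prime]

theorem Hd_prime_invariant (p d : ℕ) (hd : 0 < d) (α : Fin p → ℝ) (f : Conf p → ℂ)
    (hf1 : ∀ x : Conf p, x.1 ≠ x.2 → f (primeOp x) = -f x)
    (hf2 : ∀ x : Conf p, Tval x = p + 1 → f x = 0)
    (hf3 : ∑ x ∈ Finset.univ.filter (fun x : Conf p => x.1 = x.2), f x = 1) :
    ∀ k ≤ p,
      (∀ a : Conf p, Tval a = 0 → Hd α f d k a = 1) ∧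
      (∀ a : Conf p, 0 < Tval a → Hd α f d k (primeOp a) = Hd α f d k a) :=
  Hd_prime_invariant_general p d α f hf1 hf3
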